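/- Let S = G(⋆) be a modification of a finite group G with invertible group U normal in G, and σ ∈ C¹₀(S, L^×) a 0-cochain such that ∂σ vanishes on U × U, on U × (I\{0}) and on (I\{0}) × U (where I = S \ U). Write (additively) σ(a) = (a−1)μ for a ∈ U and some μ ∈ L (possible since ∂σ|_{U×U}=0 and H¹(U,L^×)=0). Then for every nonzero x ∈ I, the element τ(x) := σ(x) − (x−1)μ lies in P^× = (L^U)^×, and τ is constant on cosets of U: τ(a⋆x) = τ(x) for all a ∈ U. -/
import Mathlib


/-- A modification `G(⋆)` of a group `G`: a semigroup structure on `G⁰ = G ∪ {0}`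
(encoded as `WithZero G`) in which the product of two group elements is either their
group product or `0`, `0` is absorbing, and the identity of `G` is an identity. -/
structure Modification (G : Type*) [Group G] where
  mul : WithZero G → WithZero G → WithZero G
  mul_assoc : ∀ x y z, mul (mul x y) z = mul x (mul y z)
  mul_cases : ∀ x y : G, mul (x : WithZero G) (y : WithZero G) = ((x * y : G) : WithZero G)
      ∨ mul (x : WithZero G) (y : WithZero G) = 0
  zero_mul : ∀ x, mul 0 x = 0
  mul_zero : ∀ x, mul x 0 = 0
  one_mul : ∀ x, mul (1 : WithZero G) x = x
  mul_one : ∀ x, mul x (1 : WithZero G) = x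

/-- The set of invertible elements of the monoid `G(⋆)`. -/
def Modification.units {G : Type*} [Group G] (M : Modification G) : Set (WithZero G) :=
  {u | ∃ v, M.mul u v = 1 ∧ M.mul v u = 1}

/-- The invertible elements of `G(⋆)` viewed as a subset of `G`. -/
def Modification.unitSet {G : Type*} [Group G] (M : Modification G) : Set G :=
  {a : G | (a : WithZero G) ∈ M.units}

/-- `f` is a 2-dimensional 0-cocycle of the modification `G(⋆)` with coefficients in the
0-module `A` (with the action `act`): `s·f(t,u) · f(s, t⋆u) = f(s⋆t, u) · f(s,t)`
whenever the relevant products are nonzero.  (Values of `f` on pairs with zero product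
are irrelevant.) -/
def IsCocycle2 {G A : Type*} [Group G] [CommGroup A] (M : Modification G)
    (act : G → A → A) (f : WithZero G → WithZero G → A) : Prop :=
  ∀ s t u : G, M.mul (s : WithZero G) (t : WithZero G) ≠ 0 →
    M.mul (t : WithZero G) (u : WithZero G) ≠ 0 →
    M.mul (s : WithZero G) (M.mul (t : WithZero G) (u : WithZero G)) ≠ 0 →
    act s (f (t : WithZero G) (u : WithZero G))
        * f (s : WithZero G) (M.mul (t : WithZero G) (u : WithZero G))
      = f (M.mul (s : WithZero G) (t : WithZero G)) (u : WithZero G)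
        * f (s : WithZero G) (t : WithZero G)

/-- `f` is the 0-coboundary of the 1-cochain `σ`. -/
def IsCoboundary2Of {G A : Type*} [Group G] [CommGroup A] (M : Modification G)
    (act : G → A → A) (f : WithZero G → WithZero G → A) (σ : WithZero G → A) : Prop :=
  ∀ s t : G, M.mul (s : WithZero G) (t : WithZero G) ≠ 0 →
    f (s : WithZero G) (t : WithZero G)
      = act s (σ (t : WithZero G)) * (σ (M.mul (s : WithZero G) (t : WithZero G)))⁻¹
          * σ (s : WithZero G)

/-- `f` is a 2-dimensional 0-coboundary. -/
def IsCoboundary2 {G A : Type*} [Group G] [CommGroup A] (M : Modification G)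
    (act : G → A → A) (f : WithZero G → WithZero G → A) : Prop :=
  ∃ σ : WithZero G → A, IsCoboundary2Of M act f σ

/-- Two 2-dimensional 0-cochains are cohomologous. -/
def Cohomologous2 {G A : Type*} [Group G] [CommGroup A] (M : Modification G)
    (act : G → A → A) (f g : WithZero G → WithZero G → A) : Prop :=
  ∃ σ : WithZero G → A, ∀ s t : G, M.mul (s : WithZero G) (t : WithZero G) ≠ 0 →
    f (s : WithZero G) (t : WithZero G)
      = g (s : WithZero G) (t : WithZero G)
          * (act s (σ (t : WithZero G))
              * (σ (M.mul (s : WithZero G) (t : WithZero G)))⁻¹ * σ (s : WithZero G))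

lemma Modification.unit_mul_coe {G : Type*} [Group G] (M : Modification G) {a : G}
    (ha : a ∈ M.unitSet) (x : G) :
    M.mul (a : WithZero G) (x : WithZero G) = ((a * x : G) : WithZero G) := by
  obtain ⟨v, hav, hva⟩ := ha
  rcases M.mul_cases a x with h | h
  · exact h
  · exfalso
    have h1 : M.mul v (M.mul (a : WithZero G) (x : WithZero G)) = (x : WithZero G) := by
      rw [← M.mul_assoc, hva, M.one_mul]
    rw [h, M.mul_zero] at h1
    exact WithZero.coe_ne_zero h1.symm

lemma Modification.coe_mul_unit {G : Type*} [Group G] (M : Modification G) {a : G}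
    (ha : a ∈ M.unitSet) (x : G) :
    M.mul (x : WithZero G) (a : WithZero G) = ((x * a : G) : WithZero G) := by
  obtain ⟨v, hav, hva⟩ := ha
  rcases M.mul_cases x a with h | h
  · exact h
  · exfalso
    have h1 : M.mul (M.mul (x : WithZero G) (a : WithZero G)) v = (x : WithZero G) := by
      rw [M.mul_assoc, hav, M.mul_one]
    rw [h, M.zero_mul] at h1
    exact WithZero.coe_ne_zero h1.symm

/-- Setup of the main theorem: `S = G(⋆)` a modification with invertible group `U` normal
in `G`, acting on `Lˣ` by Galois automorphisms, and `σ` a 1-dimensional 0-cochain whose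
coboundary vanishes on `U × U`, `U × (I\{0})` and `(I\{0}) × U`.  If `σ(a) = a(μ)·μ⁻¹`
on `U`, then for every nonzero non-invertible `x` the element
`τ(x) = σ(x)·(x(μ)·μ⁻¹)⁻¹` is fixed by `U` (i.e. lies in `Pˣ` for `P = Lᵁ`), and `τ` is
constant on the cosets of `U`: `τ(a⋆x) = τ(x)` for all `a ∈ U`. -/
theorem tau_fixed_and_constant_on_cosets {K L : Type*} [Field K] [Field L] [Algebra K L]
    [IsGalois K L] [FiniteDimensional K L]
    (M : Modification (L ≃ₐ[K] L))
    (hnorm : ∀ g a : L ≃ₐ[K] L, a ∈ M.unitSet → g * a * g⁻¹ ∈ M.unitSet)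
    (σ : WithZero (L ≃ₐ[K] L) → Lˣ) (μ : Lˣ)
    (hσ₁ : ∀ a b : L ≃ₐ[K] L, a ∈ M.unitSet → b ∈ M.unitSet →
      M.mul (a : WithZero (L ≃ₐ[K] L)) (b : WithZero (L ≃ₐ[K] L)) ≠ 0 →
      a • σ (b : WithZero (L ≃ₐ[K] L))
          * (σ (M.mul (a : WithZero (L ≃ₐ[K] L)) (b : WithZero (L ≃ₐ[K] L))))⁻¹
          * σ (a : WithZero (L ≃ₐ[K] L)) = 1)
    (hσ₂ : ∀ a x : L ≃ₐ[K] L, a ∈ M.unitSet → x ∉ M.unitSet →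
      M.mul (a : WithZero (L ≃ₐ[K] L)) (x : WithZero (L ≃ₐ[K] L)) ≠ 0 →
      a • σ (x : WithZero (L ≃ₐ[K] L))
          * (σ (M.mul (a : WithZero (L ≃ₐ[K] L)) (x : WithZero (L ≃ₐ[K] L))))⁻¹
          * σ (a : WithZero (L ≃ₐ[K] L)) = 1)
    (hσ₃ : ∀ x a : L ≃ₐ[K] L, x ∉ M.unitSet → a ∈ M.unitSet →
      M.mul (x : WithZero (L ≃ₐ[K] L)) (a : WithZero (L ≃ₐ[K] L)) ≠ 0 →
      x • σ (a : WithZero (L ≃ₐ[K] L))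
          * (σ (M.mul (x : WithZero (L ≃ₐ[K] L)) (a : WithZero (L ≃ₐ[K] L))))⁻¹
          * σ (x : WithZero (L ≃ₐ[K] L)) = 1)
    (hμ : ∀ a : L ≃ₐ[K] L, a ∈ M.unitSet → σ (a : WithZero (L ≃ₐ[K] L)) = a • μ * μ⁻¹) :
    ∀ x : L ≃ₐ[K] L, x ∉ M.unitSet →
      (∀ a : L ≃ₐ[K] L, a ∈ M.unitSet →
        a • (σ (x : WithZero (L ≃ₐ[K] L)) * (x • μ * μ⁻¹)⁻¹)
          = σ (x : WithZero (L ≃ₐ[K] L)) * (x • μ * μ⁻¹)⁻¹) ∧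
      (∀ a : L ≃ₐ[K] L, a ∈ M.unitSet →
        M.mul (a : WithZero (L ≃ₐ[K] L)) (x : WithZero (L ≃ₐ[K] L))
            = ((a * x : L ≃ₐ[K] L) : WithZero (L ≃ₐ[K] L)) ∧
        σ ((a * x : L ≃ₐ[K] L) : WithZero (L ≃ₐ[K] L)) * ((a * x) • μ * μ⁻¹)⁻¹
          = σ (x : WithZero (L ≃ₐ[K] L)) * (x • μ * μ⁻¹)⁻¹) := by
  intro x hx
  have key : ∀ {A B C : Lˣ}, A * B⁻¹ * C = 1 → B = A * C := by
    intro A B C h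
    have h2 : A * C * B⁻¹ = 1 := by rw [← mul_right_comm A B⁻¹ C]; exact h
    exact (mul_inv_eq_one.mp h2).symm
  -- τ constant on right cosets: τ(x*a) = τ(x)
  have stepA : ∀ a : L ≃ₐ[K] L, a ∈ M.unitSet →
      σ ((x * a : L ≃ₐ[K] L) : WithZero (L ≃ₐ[K] L)) * ((x * a) • μ * μ⁻¹)⁻¹
        = σ (x : WithZero (L ≃ₐ[K] L)) * (x • μ * μ⁻¹)⁻¹ := by
    intro a ha
    have hne : M.mul (x : WithZero (L ≃ₐ[K] L)) (a : WithZero (L ≃ₐ[K] L)) ≠ 0 := by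
      rw [M.coe_mul_unit ha]; exact WithZero.coe_ne_zero
    have h := hσ₃ x a hx ha hne
    rw [M.coe_mul_unit ha, hμ a ha] at h
    have h' := key h
    rw [h', mul_smul]
    simp only [smul_mul', smul_inv', mul_smul, mul_inv_rev, inv_inv]
    generalize σ (x : WithZero (L ≃ₐ[K] L)) = A
    generalize (x : L ≃ₐ[K] L) • μ = B
    generalize x • a • μ = C
    simp [mul_comm, mul_left_comm, mul_assoc]
  -- τ(a*x) = a • τ(x)
  have stepB : ∀ a : L ≃ₐ[K] L, a ∈ M.unitSet →
      σ ((a * x : L ≃ₐ[K] L) : WithZero (L ≃ₐ[K] L)) * ((a * x) • μ * μ⁻¹)⁻¹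
        = a • (σ (x : WithZero (L ≃ₐ[K] L)) * (x • μ * μ⁻¹)⁻¹) := by
    intro a ha
    have hne : M.mul (a : WithZero (L ≃ₐ[K] L)) (x : WithZero (L ≃ₐ[K] L)) ≠ 0 := by
      rw [M.unit_mul_coe ha]; exact WithZero.coe_ne_zero
    have h := hσ₂ a x ha hx hne
    rw [M.unit_mul_coe ha, hμ a ha] at h
    have h' := key h
    rw [h', mul_smul]
    simp only [smul_mul', smul_inv', mul_smul, mul_inv_rev, inv_inv]
    generalize a • σ (x : WithZero (L ≃ₐ[K] L)) = A
    generalize a • μ = B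
    generalize a • x • μ = C
    simp only [mul_comm, mul_left_comm, mul_assoc]
    rw [mul_left_comm μ A, mul_left_comm μ B, mul_inv_cancel_left]
  -- part (1)
  have part1 : ∀ a : L ≃ₐ[K] L, a ∈ M.unitSet →
      a • (σ (x : WithZero (L ≃ₐ[K] L)) * (x • μ * μ⁻¹)⁻¹)
        = σ (x : WithZero (L ≃ₐ[K] L)) * (x • μ * μ⁻¹)⁻¹ := by
    intro a ha
    have hax : a * x = x * (x⁻¹ * a * x) := by group
    have hU : x⁻¹ * a * x ∈ M.unitSet := by
      have := hnorm x⁻¹ a ha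
      rwa [inv_inv] at this
    calc a • (σ (x : WithZero (L ≃ₐ[K] L)) * (x • μ * μ⁻¹)⁻¹)
        = σ ((a * x : L ≃ₐ[K] L) : WithZero (L ≃ₐ[K] L)) * ((a * x) • μ * μ⁻¹)⁻¹ :=
          (stepB a ha).symm
      _ = σ ((x * (x⁻¹ * a * x) : L ≃ₐ[K] L) : WithZero (L ≃ₐ[K] L))
            * ((x * (x⁻¹ * a * x)) • μ * μ⁻¹)⁻¹ := by rw [← hax]
      _ = σ (x : WithZero (L ≃ₐ[K] L)) * (x • μ * μ⁻¹)⁻¹ := stepA _ hU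
  refine ⟨part1, fun a ha => ⟨M.unit_mul_coe ha x, ?_⟩⟩
  rw [stepB a ha, part1 a ha]
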